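/- arXiv:1704.04190 — 4 statements merged into one kernel-verified Lean document; each statement's English description precedes it below -/
import Mathlib

section
/- If two locations ℓ₁ and ℓ₂ of a negotiation diagram are independent (their nodes have disjoint domains), and configuration C₁ goes to C₂ by executing ℓ₁ then ℓ₂, then C₁ also goes to C₂ by executing ℓ₂ then ℓ₁. -/
/-- A (possibly nondeterministic) negotiation diagram. -/
structure NNeg (P N R : Type*) where
  dom : N → Set P
  out : N → Set R
  δ : N → R → P → Set N
  ninit : N
  nfin : N

namespace NNeg
variable {P N R : Type*}

def Enabled (G : NNeg P N R) (C : P → Set N) (n : N) : Prop := ∀ p ∈ G.dom n, n ∈ C p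

def Step (G : NNeg P N R) (C : P → Set N) (l : N × R) (C' : P → Set N) : Prop :=
  Enabled G C l.1 ∧ l.2 ∈ G.out l.1 ∧
    ∀ p, (p ∈ G.dom l.1 → C' p = G.δ l.1 l.2 p) ∧ (p ∉ G.dom l.1 → C' p = C p)

inductive Run (G : NNeg P N R) : (P → Set N) → List (N × R) → (P → Set N) → Prop
  | nil (C) : Run G C [] C
  | cons {C C' C'' l w} : Step G C l C' → Run G C' w C'' → Run G C (l :: w) C''

def Cinit (G : NNeg P N R) : P → Set N := fun _ => {G.ninit}
def Cfin (G : NNeg P N R) : P → Set N := fun _ => {G.nfin}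

def Successful (G : NNeg P N R) (w : List (N × R)) : Prop := Run G (Cinit G) w (Cfin G)

def Indep (G : NNeg P N R) (l1 l2 : N × R) : Prop := Disjoint (G.dom l1.1) (G.dom l2.1)

def Swap (G : NNeg P N R) (w1 w2 : List (N × R)) : Prop :=
  ∃ u v l1 l2, Indep G l1 l2 ∧ w1 = u ++ l1 :: l2 :: v ∧ w2 = u ++ l2 :: l1 :: v

def MazEquiv (G : NNeg P N R) : List (N × R) → List (N × R) → Prop :=
  Relation.ReflTransGen (Swap G)

end NNeg

open NNeg

/-- independent locations can be executed in either order,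
reaching the same configuration. -/
theorem independent_locations_commute {P N R : Type*} (G : NNeg P N R)
    (l1 l2 : N × R) (h : Indep G l1 l2) (C1 C2 : P → Set N)
    (hrun : Run G C1 [l1, l2] C2) :
    Run G C1 [l2, l1] C2 := by
  classical
  rcases hrun with - | @⟨_, C', _, _, _, hs1, hr⟩
  rcases hr with - | @⟨_, C'', _, _, _, hs2, hr2⟩
  cases hr2
  obtain ⟨he1, ho1, hd1⟩ := hs1
  obtain ⟨he2, ho2, hd2⟩ := hs2
  have hdisj : ∀ p, p ∈ G.dom l1.1 → p ∉ G.dom l2.1 := fun p h1 h2 =>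
    h.ne_of_mem h1 h2 rfl
  have hdisj' : ∀ p, p ∈ G.dom l2.1 → p ∉ G.dom l1.1 := fun p h2 h1 =>
    hdisj p h1 h2
  set D : P → Set N := fun p => if p ∈ G.dom l2.1 then G.δ l2.1 l2.2 p else C1 p with hD
  have hstep2 : Step G C1 l2 D := by
    refine ⟨fun p hp => ?_, ho2, fun p => ⟨fun hp => ?_, fun hp => ?_⟩⟩
    · have := he2 p hp
      rwa [(hd1 p).2 (hdisj' p hp)] at this
    · simp [hD, hp]
    · simp [hD, hp]
  have hstep1' : Step G D l1 C2 := by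
    refine ⟨fun p hp => ?_, ho1, fun p => ⟨fun hp => ?_, fun hp => ?_⟩⟩
    · have := he1 p hp
      simpa [hD, hdisj p hp] using this
    · rw [(hd2 p).2 (hdisj p hp)]
      exact (hd1 p).1 hp
    · by_cases hp2 : p ∈ G.dom l2.1
      · rw [(hd2 p).1 hp2]
        simp [hD, hp2]
      · rw [(hd2 p).2 hp2, (hd1 p).2 hp]
        simp [hD, hp2]
  exact Run.cons hstep2 (Run.cons hstep1' (Run.nil _))
end

section
/- Mazurkiewicz equivalence preserves runs: if C₁ →^w C₂ is a run of a negotiation diagram and the sequence of locations v is Mazurkiewicz equivalent to w, then C₁ →^v C₂ is also a run. In particular, if w is a successful run (from the initial to the final configuration) then so is v. -/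
open NNeg

lemma run_append {P N R : Type*} {G : NNeg P N R} {C C2 : P → Set N} {u w : List (N × R)}
    (h : Run G C (u ++ w) C2) : ∃ Cm, Run G C u Cm ∧ Run G Cm w C2 := by
  induction u generalizing C with
  | nil => exact ⟨C, Run.nil C, h⟩
  | cons l u ih =>
    cases h with
    | cons hs hr =>
      obtain ⟨Cm, h1, h2⟩ := ih hr
      exact ⟨Cm, Run.cons hs h1, h2⟩

lemma run_append' {P N R : Type*} {G : NNeg P N R} {C Cm C2 : P → Set N} {u w : List (N × R)}
    (h1 : Run G C u Cm) (h2 : Run G Cm w C2) : Run G C (u ++ w) C2 := by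
  induction h1 with
  | nil => exact h2
  | cons hs _ ih => exact Run.cons hs (ih h2)

open Classical in
lemma step_comm {P N R : Type*} {G : NNeg P N R} {C C' C'' : P → Set N} {l1 l2 : N × R}
    (hind : Indep G l1 l2) (h1 : Step G C l1 C') (h2 : Step G C' l2 C'') :
    ∃ D, Step G C l2 D ∧ Step G D l1 C'' := by
  obtain ⟨he1, ho1, hc1⟩ := h1
  obtain ⟨he2, ho2, hc2⟩ := h2
  have hdisj : ∀ p, p ∈ G.dom l1.1 → p ∉ G.dom l2.1 := fun p hp hq =>
    (Set.disjoint_left.mp hind) hp hq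
  have hdisj' : ∀ p, p ∈ G.dom l2.1 → p ∉ G.dom l1.1 := fun p hp hq => hdisj p hq hp
  refine ⟨fun p => if p ∈ G.dom l2.1 then G.δ l2.1 l2.2 p else C p, ?_, ?_⟩
  · refine ⟨fun p hp => ?_, ho2, fun p => ⟨fun hp => if_pos hp, fun hp => if_neg hp⟩⟩
    have := (hc1 p).2 (hdisj' p hp)
    exact this ▸ he2 p hp
  · refine ⟨fun p hp => ?_, ho1, fun p => ⟨fun hp => ?_, fun hp => ?_⟩⟩
    · dsimp only; rw [if_neg (hdisj p hp)]; exact he1 p hp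
    · rw [(hc2 p).2 (hdisj p hp), (hc1 p).1 hp]
    · by_cases hq : p ∈ G.dom l2.1
      · dsimp only; rw [if_pos hq, (hc2 p).1 hq]
      · dsimp only; rw [if_neg hq, (hc2 p).2 hq, (hc1 p).2 hp]

lemma swap_preserves {P N R : Type*} {G : NNeg P N R} {w v : List (N × R)}
    (hs : Swap G w v) {C1 C2 : P → Set N} (h : Run G C1 w C2) : Run G C1 v C2 := by
  obtain ⟨u, t, l1, l2, hind, rfl, rfl⟩ := hs
  obtain ⟨Cm, hu, hrest⟩ := run_append h
  cases hrest with
  | cons hs1 hr =>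
    cases hr with
    | cons hs2 hr2 =>
      obtain ⟨D, hd1, hd2⟩ := step_comm hind hs1 hs2
      exact run_append' hu (Run.cons hd1 (Run.cons hd2 hr2))

/-- Mazurkiewicz equivalence preserves runs, and in particular
successful runs. -/
theorem mazurkiewicz_preserves_runs {P N R : Type*} (G : NNeg P N R)
    (w v : List (N × R)) (hequiv : MazEquiv G w v) :
    (∀ C1 C2 : P → Set N, Run G C1 w C2 → Run G C1 v C2) ∧
      (Successful G w → Successful G v) := by
  have main : ∀ C1 C2 : P → Set N, Run G C1 w C2 → Run G C1 v C2 := by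
    induction hequiv with
    | refl => exact fun _ _ h => h
    | tail _ hs ih => exact fun C1 C2 h => swap_preserves hs (ih C1 C2 h)
  exact ⟨main, fun h => main _ _ h⟩
end

section
/- Unique Configuration Lemma: let 𝒩 be a sound deterministic negotiation diagram and X ⊆ Proc a set of processes. If C₁, C₂ are reachable configurations such that C₁(p) = C₂(p) for every p ∈ X, and every node enabled at C₁ or at C₂ has a domain intersecting X, then C₁ = C₂. -/
open scoped Classical
noncomputable section

/-- A deterministic negotiation diagram: processes `P`, nodes `N`, outcomes `R`. -/
structure DNeg (P N R : Type*) where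
  dom : N → Set P
  out : N → Set R
  δ : N → R → P → Option N
  ninit : N
  nfin : N

namespace DNeg
variable {P N R : Type*}

/-- A node is enabled at a configuration if all its processes are at it. -/
def Enabled (G : DNeg P N R) (C : P → N) (n : N) : Prop := ∀ p ∈ G.dom n, C p = n

/-- Executing an enabled location. -/
def Step (G : DNeg P N R) (C : P → N) (l : N × R) (C' : P → N) : Prop :=
  Enabled G C l.1 ∧ l.2 ∈ G.out l.1 ∧
    ∀ p, (p ∈ G.dom l.1 → G.δ l.1 l.2 p = some (C' p)) ∧ (p ∉ G.dom l.1 → C' p = C p)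

/-- A run executes a sequence of locations. -/
inductive Run (G : DNeg P N R) : (P → N) → List (N × R) → (P → N) → Prop
  | nil (C) : Run G C [] C
  | cons {C C' C'' l w} : Step G C l C' → Run G C' w C'' → Run G C (l :: w) C''

def Cinit (G : DNeg P N R) : P → N := fun _ => G.ninit
def Cfin (G : DNeg P N R) : P → N := fun _ => G.nfin

def Reachable (G : DNeg P N R) (C : P → N) : Prop := ∃ w, Run G (Cinit G) w C

def Successful (G : DNeg P N R) (w : List (N × R)) : Prop := Run G (Cinit G) w (Cfin G)

/-- Soundness: every initial run can be extended to a successful one. -/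
def Sound (G : DNeg P N R) : Prop :=
  ∀ C w, Run G (Cinit G) w C → ∃ v, Run G C v (Cfin G)

/-- Independence of locations: disjoint domains of their nodes. -/
def Indep (G : DNeg P N R) (l1 l2 : N × R) : Prop := Disjoint (G.dom l1.1) (G.dom l2.1)

def Swap (G : DNeg P N R) (w1 w2 : List (N × R)) : Prop :=
  ∃ u v l1 l2, Indep G l1 l2 ∧ w1 = u ++ l1 :: l2 :: v ∧ w2 = u ++ l2 :: l1 :: v

/-- Mazurkiewicz equivalence. -/
def MazEquiv (G : DNeg P N R) : List (N × R) → List (N × R) → Prop :=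
  Relation.ReflTransGen (Swap G)

def ReachableNode (G : DNeg P N R) (m : N) : Prop :=
  ∃ C, Reachable G C ∧ Enabled G C m

/-- The graph of the negotiation diagram. -/
def Edge (G : DNeg P N R) (m m' : N) : Prop :=
  ∃ p a, a ∈ G.out m ∧ p ∈ G.dom m ∧ G.δ m a p = some m'

/-- A scheduler picks an enabled node after each initial run, whenever one exists. -/
def IsScheduler (G : DNeg P N R) (S : List (N × R) → N) : Prop :=
  ∀ w C, Run G (Cinit G) w C → (∃ m, Enabled G C m) → Enabled G C (S w)

/-- A run is compatible with a scheduler. -/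
def Compatible (G : DNeg P N R) (S : List (N × R) → N) (w : List (N × R)) : Prop :=
  ∀ i (h : i < w.length), 1 ≤ i → S (w.take i) = (w.get ⟨i, h⟩).1

/-- The transformer of a run: composition of the transformers of its locations. -/
def semRun {D : Type*} (sem : N × R → D → D) (w : List (N × R)) : D → D :=
  w.foldl (fun g l => sem l ∘ g) id

end DNeg

open DNeg


namespace UCAux

open DNeg

variable {P N R : Type*} {G : DNeg P N R}

lemma run_append {C D E : P → N} {w₁ w₂ : List (N × R)}
    (h₁ : Run G C w₁ D) (h₂ : Run G D w₂ E) : Run G C (w₁ ++ w₂) E := by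
  induction h₁ with
  | nil => simpa using h₂
  | cons s r ih => exact Run.cons s (ih h₂)

lemma run_split {C E : P → N} {w₁ w₂ : List (N × R)}
    (h : Run G C (w₁ ++ w₂) E) : ∃ D, Run G C w₁ D ∧ Run G D w₂ E := by
  induction w₁ generalizing C with
  | nil => exact ⟨C, Run.nil C, h⟩
  | cons l t ih =>
    cases h with
    | cons s r =>
      obtain ⟨D, h1, h2⟩ := ih r
      exact ⟨D, Run.cons s h1, h2⟩

lemma step_untouched {C C' : P → N} {l : N × R} {p : P}
    (h : Step G C l C') (hp : p ∉ G.dom l.1) : C' p = C p := (h.2.2 p).2 hp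

lemma run_untouched {C D : P → N} {w : List (N × R)} {p : P}
    (h : Run G C w D) (hp : ∀ l ∈ w, p ∉ G.dom l.1) : D p = C p := by
  induction w generalizing C with
  | nil => cases h; rfl
  | cons l t ih =>
    cases h with
    | cons s r =>
      rw [ih r (fun l' hl' => hp l' (by simp [hl'])), step_untouched s (hp l (by simp))]

lemma exists_first {α : Type*} (Q : α → Prop) :
    ∀ (w : List α), (∃ l ∈ w, Q l) →
      ∃ w₁ l w₂, w = w₁ ++ l :: w₂ ∧ (∀ l' ∈ w₁, ¬ Q l') ∧ Q l := by
  intro w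
  induction w with
  | nil => rintro ⟨l, hl, -⟩; exact absurd hl (by simp)
  | cons a t ih =>
    intro hex
    by_cases ha : Q a
    · exact ⟨[], a, t, rfl, by simp, ha⟩
    · have : ∃ l ∈ t, Q l := by
        obtain ⟨l, hl, hQ⟩ := hex
        rcases List.mem_cons.1 hl with h | h
        · exact absurd (h ▸ hQ) ha
        · exact ⟨l, h, hQ⟩
      obtain ⟨w₁, l, w₂, rfl, hclean, hQ⟩ := ih this
      exact ⟨a :: w₁, l, w₂, rfl, by
        intro l' hl'
        rcases List.mem_cons.1 hl' with h | h
        · exact h ▸ ha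
        · exact hclean l' h, hQ⟩

/-- The first step of a run touching a process `p` fires the node where `p` initially is. -/
lemma first_touch {C D : P → N} {w : List (N × R)} {p : P}
    (h : Run G C w D) (htouch : ∃ l ∈ w, p ∈ G.dom l.1) :
    ∃ w₁ l w₂ E E', w = w₁ ++ l :: w₂ ∧ Run G C w₁ E ∧ Step G E l E' ∧ Run G E' w₂ D ∧
      (∀ l' ∈ w₁, p ∉ G.dom l'.1) ∧ p ∈ G.dom l.1 ∧ l.1 = C p := by
  obtain ⟨w₁, l, w₂, rfl, hclean, hQ⟩ := exists_first (fun l => p ∈ G.dom l.1) w htouch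
  obtain ⟨E, h1, h2⟩ := run_split h
  cases h2 with
  | cons s r =>
    refine ⟨w₁, l, w₂, E, _, rfl, h1, s, r, hclean, hQ, ?_⟩
    have hE : E p = C p := run_untouched h1 hclean
    have : E p = l.1 := s.1 p hQ
    rw [← this, hE]

/-- Replay a run not touching `Y` from a configuration agreeing outside `Y`. -/
lemma replay {C C' D : P → N} {w : List (N × R)} {Y : Set P}
    (h : Run G C w D) (hw : ∀ l ∈ w, ∀ q ∈ G.dom l.1, q ∉ Y)
    (hagr : ∀ p, p ∉ Y → C p = C' p) :
    ∃ D', Run G C' w D' ∧ (∀ p, p ∉ Y → D' p = D p) ∧ (∀ p, p ∈ Y → D' p = C' p) := by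
  induction w generalizing C C' with
  | nil =>
    cases h
    exact ⟨C', Run.nil C', fun p hp => (hagr p hp).symm, fun p _ => rfl⟩
  | cons l w' ih =>
    cases h with
    | @cons _ C₁ _ _ _ s r =>
    classical
    set C₁' : P → N := fun p => if p ∈ G.dom l.1 then C₁ p else C' p with hC₁'
    have hdomY : ∀ q ∈ G.dom l.1, q ∉ Y := hw l (by simp)
    have hstep : Step G C' l C₁' := by
      refine ⟨?_, s.2.1, ?_⟩
      · intro p hp
        rw [← hagr p (hdomY p hp)]
        exact s.1 p hp
      · intro p
        constructor
        · intro hp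
          simp only [hC₁', if_pos hp]
          exact (s.2.2 p).1 hp
        · intro hp
          simp only [hC₁', if_neg hp]
    have hagr' : ∀ p, p ∉ Y → C₁ p = C₁' p := by
      intro p hp
      by_cases hd : p ∈ G.dom l.1
      · simp only [hC₁', if_pos hd]
      · simp only [hC₁', if_neg hd]
        rw [(s.2.2 p).2 hd]
        exact hagr p hp
    obtain ⟨D', hr', h1, h2⟩ := ih r (fun l' hl' => hw l' (by simp [hl'])) hagr'
    refine ⟨D', Run.cons hstep hr', h1, ?_⟩
    intro p hp
    rw [h2 p hp]
    simp only [hC₁', if_neg (fun hd => hdomY p hd hp)]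

/-- If `z` sits frozen (not in the domain of its node) and `y₀` waits at a node `e ≠ nfin`
needing `z`, then `y₀` never moves. -/
lemma stuck {C D : P → N} {w : List (N × R)} {z y₀ : P} {e : N}
    (h : Run G C w D) (hy0 : C y₀ = e) (hy0d : y₀ ∈ G.dom e) (hzd : z ∈ G.dom e)
    (hne : e ≠ G.nfin) (hz : C z = G.nfin) (hznf : z ∉ G.dom G.nfin) :
    D y₀ = e ∧ D z = G.nfin := by
  induction w generalizing C with
  | nil => cases h; exact ⟨hy0, hz⟩
  | cons l w' ih =>
    cases h with
    | cons s r =>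
      have hzu : z ∉ G.dom l.1 := by
        intro hmem
        have h1 : C z = l.1 := s.1 z hmem
        rw [hz] at h1
        exact hznf (h1 ▸ hmem)
      have hyu : y₀ ∉ G.dom l.1 := by
        intro hmem
        have h1 : C y₀ = l.1 := s.1 y₀ hmem
        rw [hy0] at h1
        have h2 := s.1 z (h1 ▸ hzd)
        rw [← h1, hz] at h2
        exact hne h2.symm
      exact ih r (by rw [step_untouched s hyu]; exact hy0) (by rw [step_untouched s hzu]; exact hz)

lemma swap_adjacent {C C₁ C₂ : P → N} {l l' : N × R}
    (h₁ : Step G C l C₁) (h₂ : Step G C₁ l' C₂)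
    (hdisj : ∀ p ∈ G.dom l'.1, p ∉ G.dom l.1) :
    ∃ C₁', Step G C l' C₁' ∧ Step G C₁' l C₂ := by
  classical
  set C₁' : P → N := fun p => if p ∈ G.dom l'.1 then C₂ p else C p with hdef
  have hdisj' : ∀ p ∈ G.dom l.1, p ∉ G.dom l'.1 := fun p hp hp' => hdisj p hp' hp
  refine ⟨C₁', ⟨?_, h₂.2.1, ?_⟩, ⟨?_, h₁.2.1, ?_⟩⟩
  · intro p hp
    rw [← step_untouched h₁ (hdisj p hp)]
    exact h₂.1 p hp
  · intro p
    constructor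
    · intro hp
      simp only [hdef, if_pos hp]
      exact (h₂.2.2 p).1 hp
    · intro hp
      simp only [hdef, if_neg hp]
  · intro p hp
    simp only [hdef, if_neg (hdisj' p hp)]
    exact h₁.1 p hp
  · intro p
    constructor
    · intro hp
      rw [show C₂ p = C₁ p from step_untouched h₂ (hdisj' p hp)]
      exact (h₁.2.2 p).1 hp
    · intro hp
      by_cases hp' : p ∈ G.dom l'.1
      · simp only [hdef, if_pos hp']
      · simp only [hdef, if_neg hp']
        rw [step_untouched h₂ hp', step_untouched h₁ hp]

lemma comm_front {C D : P → N} {l : N × R} {π ρ : List (N × R)}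
    (h : Run G C (π ++ l :: ρ) D) (hen : Enabled G C l.1)
    (hd : ∀ l' ∈ π, ∀ p ∈ G.dom l'.1, p ∉ G.dom l.1) :
    Run G C (l :: (π ++ ρ)) D := by
  induction π generalizing C with
  | nil => simpa using h
  | cons l₀ t ih =>
    cases h with
    | cons s₀ r =>
      rename_i C₁
      have hen₁ : Enabled G C₁ l.1 := by
        intro p hp
        rw [step_untouched s₀ (fun hmem => hd l₀ (by simp) p hmem hp)]
        exact hen p hp
      have hr : Run G C₁ (l :: (t ++ ρ)) D :=
        ih r hen₁ (fun l' hl' => hd l' (by simp [hl']))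
      cases hr with
      | cons s₁ r₁ =>
        obtain ⟨C₁', hA, hB⟩ := swap_adjacent s₀ s₁
          (fun p hp hmem => hd l₀ (by simp) p hmem hp)
        exact Run.cons hA (Run.cons hB r₁)

/-- Base case: a reachable configuration that is `nfin`-covered against `Cfin` equals `Cfin`. -/
lemma base_lemma (hd : ∀ n : N, (G.dom n).Nonempty) (hs : Sound G) {U : P → N}
    (hrU : Reachable G U)
    (hh : ∀ e, Enabled G U e → (∃ x ∈ G.dom e, U x = G.nfin) ∨ e = G.nfin) :
    U = Cfin G := by
  classical
  by_contra hne
  have hY : ∃ p₀, U p₀ ≠ G.nfin := by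
    by_contra h
    push_neg at h
    exact hne (funext fun p => h p)
  obtain ⟨p₀, hp₀⟩ := hY
  set Y : Set P := {p | U p ≠ G.nfin} with hYdef
  obtain ⟨w₀, h₀⟩ := hrU
  obtain ⟨u₁, hu₁⟩ := hs U w₀ h₀
  -- every node enabled at U is nfin
  have hUen : ∀ e, Enabled G U e → e = G.nfin := by
    intro e he
    rcases hh e he with ⟨x, hx, hxv⟩ | h
    · exact (he x hx).symm.trans hxv
    · exact h
  -- nfin is enabled at U
  have henf : ∀ q ∈ G.dom G.nfin, U q = G.nfin := by
    cases u₁ with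
    | nil => cases hu₁; exact absurd rfl hne
    | cons l₀ rest =>
      cases hu₁ with
      | cons s₀ r₀ =>
        have h1 : l₀.1 = G.nfin := hUen l₀.1 s₀.1
        intro q hq
        rw [← h1]
        exact s₀.1 q (h1 ▸ hq)
  -- u₁ touches Y
  have htouch : ∃ l ∈ u₁, ∃ q ∈ G.dom l.1, q ∈ Y := by
    by_contra h
    push_neg at h
    have : Cfin G p₀ = U p₀ :=
      run_untouched hu₁ (fun l hl hmem => h l hl p₀ hmem hp₀)
    exact hp₀ (this.symm.trans rfl)
  obtain ⟨w₁, l, w₂, hdecomp, hclean, z₁, hz₁d, hz₁Y⟩ :=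
    exists_first (fun l => ∃ q ∈ G.dom l.1, q ∈ Y) u₁ htouch
  rw [hdecomp] at hu₁
  obtain ⟨E, hE, hrest⟩ := run_split hu₁
  cases hrest with
  | cons s r =>
    rename_i E'
    have hcleanz : ∀ q, q ∈ Y → ∀ l' ∈ w₁, q ∉ G.dom l'.1 :=
      fun q hq l' hl' hmem => hclean l' hl' ⟨q, hmem, hq⟩
    -- the fired node is U z₁ ≠ nfin
    have hEz₁ : E z₁ = U z₁ := run_untouched hE (hcleanz z₁ hz₁Y)
    have hnode : l.1 = U z₁ := (s.1 z₁ hz₁d).symm.trans hEz₁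
    have hne2 : l.1 ≠ G.nfin := by rw [hnode]; exact hz₁Y
    -- there is a non-Y process in dom l.1
    have hy₁ : ∃ y₁ ∈ G.dom l.1, y₁ ∉ Y := by
      by_contra h
      push_neg at h
      have : Enabled G U l.1 := by
        intro q hq
        have : E q = U q := run_untouched hE (hcleanz q (h q hq))
        exact this.symm.trans (s.1 q hq)
      exact hne2 (hUen l.1 this)
    obtain ⟨y₁, hy₁d, hy₁Y⟩ := hy₁
    -- replay w₁ from Cfin
    have hagr : ∀ p, p ∉ Y → U p = Cfin G p := by
      intro p hp
      have : U p = G.nfin := by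
        by_contra h
        exact hp h
      exact this
    obtain ⟨Ehat, hEhatrun, hEhat1, hEhat2⟩ :=
      replay hE (fun l' hl' q hq hqY => hclean l' hl' ⟨q, hq, hqY⟩) hagr
    have hEhaty₁ : Ehat y₁ = l.1 := by
      rw [hEhat1 y₁ hy₁Y]
      exact s.1 y₁ hy₁d
    have hEhatz₁ : Ehat z₁ = G.nfin := hEhat2 z₁ hz₁Y
    have hz₁nf : z₁ ∉ G.dom G.nfin := fun hmem => hz₁Y (henf z₁ hmem)
    -- Ehat is reachable; soundness gives a run to Cfin; stuck gives contradiction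
    obtain ⟨vc, hvc⟩ := hs (Cinit G) [] (Run.nil _)
    have hEhatreach : Run G (Cinit G) (vc ++ w₁) Ehat := run_append hvc hEhatrun
    obtain ⟨w₃, hw₃⟩ := hs Ehat (vc ++ w₁) hEhatreach
    have := (stuck hw₃ hEhaty₁ hy₁d hz₁d hne2 hEhatz₁ hz₁nf).1
    exact hne2 this.symm

/-- Main lemma: strong induction on the length of a run from `V` to `Cfin`. -/
lemma main_lemma (hd : ∀ n : N, (G.dom n).Nonempty) (hs : Sound G) :
    ∀ k : ℕ, ∀ U V : P → N, ∀ w : List (N × R),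
      Reachable G U → Reachable G V → Run G V w (Cfin G) → w.length = k →
      (∀ e, Enabled G U e ∨ Enabled G V e → (∃ x ∈ G.dom e, U x = V x) ∨ e = G.nfin) →
      U = V := by
  classical
  intro k
  induction k using Nat.strong_induction_on with
  | _ k IH =>
  intro U V w hrU hrV hrun hlen hh
  -- empty run: V = Cfin, use the base lemma
  rcases w with - | ⟨m₀, w'⟩
  · cases hrun
    exact base_lemma hd hs hrU (fun e he => by
      rcases hh e (Or.inl he) with ⟨x, hxd, hxv⟩ | h
      · exact Or.inl ⟨x, hxd, hxv⟩
      · exact Or.inr h)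
  -- nonempty run
  by_cases hinf : ∃ what, Run G V what (Cfin G) ∧ what.length = k ∧
      ∀ l ∈ what, ¬ Enabled G U l.1
  · -- CASE ∞ : some length-k run from V fires no U-enabled node
    obtain ⟨what, hwr, hwl, hwcl⟩ := hinf
    have hUen : ∀ h', Enabled G U h' → h' = G.nfin := by
      intro h' he
      rcases hh h' (Or.inl he) with ⟨x, hxd, hxv⟩ | h
      · -- x is never touched along `what`
        have hxu : ∀ l ∈ what, x ∉ G.dom l.1 := by
          by_contra hc
          push_neg at hc
          obtain ⟨w₁, l, w₂, E, E', hdec, hE, hstep, hrest, hcl, hxd', hnode⟩ :=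
            first_touch hwr hc
          have hlmem : l ∈ what := by rw [hdec]; simp
          apply hwcl l hlmem
          rw [hnode, ← hxv, he x hxd]
          exact he
        have hfix : Cfin G x = V x := run_untouched hwr hxu
        have hVx : V x = G.nfin := hfix.symm
        exact (he x hxd).symm.trans (hxv.trans hVx)
      · exact h
    have hUC : U = Cfin G := base_lemma hd hs hrU (fun e he => Or.inr (hUen e he))
    rcases what with - | ⟨l₀, t⟩
    · cases hwr
      exact hUC
    · exfalso
      cases hwr with
      | cons s₀ r₀ =>
        have henV : Enabled G V l₀.1 := s₀.1
        have hl₀ : l₀.1 = G.nfin := by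
          rcases hh l₀.1 (Or.inr henV) with ⟨x, hxd, hxv⟩ | h
          · have hUx : U x = G.nfin := by rw [hUC]; rfl
            exact (henV x hxd).symm.trans (hxv.symm.trans hUx)
          · exact h
        have : Enabled G U l₀.1 := by
          rw [hUC, hl₀]
          intro q _
          rfl
        exact hwcl l₀ (by simp) this
  · -- CASE FIN : every length-k run from V fires some U-enabled node
    push_neg at hinf
    set Pm : ℕ → Prop := fun m => ∃ what a l b, Run G V what (Cfin G) ∧ what.length = k ∧
      what = a ++ l :: b ∧ a.length = m ∧ (∀ l' ∈ a, ¬ Enabled G U l'.1) ∧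
      Enabled G U l.1 with hPmdef
    have hP0 : ∃ m ≤ k, Pm m := by
      obtain ⟨l, hlmem, hlen'⟩ := hinf (m₀ :: w') hrun hlen
      obtain ⟨a₀, l₀, b₀, hdec, hcl, hQ⟩ :=
        exists_first (fun l' => Enabled G U l'.1) (m₀ :: w') ⟨l, hlmem, hlen'⟩
      have hlea : a₀.length ≤ k := by
        have h1 := congrArg List.length hdec
        have h2 : w'.length + 1 = k := by simpa using hlen
        simp at h1
        omega
      exact ⟨a₀.length, hlea, (m₀ :: w'), a₀, l₀, b₀, hrun, hlen, hdec, rfl, hcl, hQ⟩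
    obtain ⟨m₀', hm₀le, hPm₀⟩ := hP0
    set M : ℕ := Nat.findGreatest Pm k with hMdef
    have hPM : Pm M := Nat.findGreatest_spec hm₀le hPm₀
    obtain ⟨what, a, g, b, hwr, hwl, hdec, halen, haclean, hgU⟩ := hPM
    rw [hdec] at hwr hwl
    obtain ⟨F, hFa, hrest⟩ := run_split hwr
    cases hrest with
    | cons sF rb =>
      rename_i F₁
      have hk : a.length + (b.length + 1) = k := by
        have := hwl
        simp at this
        omega
      -- F1 : nodes enabled at F but not at U are never touched in the suffix
      have hF1 : ∀ e, Enabled G F e → ¬ Enabled G U e →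
          ∀ l' ∈ g :: b, ∀ p ∈ G.dom l'.1, p ∉ G.dom e := by
        intro e heF heU
        by_contra hc
        push_neg at hc
        obtain ⟨pi, lj, rho, hdec2, hcl2, p₁, hp₁l, hp₁e⟩ :=
          exists_first (fun l' => ∃ p ∈ G.dom l'.1, p ∈ G.dom e) (g :: b) hc
        have hsuffix : Run G F (pi ++ lj :: rho) (Cfin G) := by
          rw [← hdec2]
          exact Run.cons sF rb
        obtain ⟨Gj, hGj, hrest2⟩ := run_split hsuffix
        cases hrest2 with
        | cons sj rj =>
          have huP : ∀ l' ∈ pi, p₁ ∉ G.dom l'.1 :=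
            fun l' hl' hmem => hcl2 l' hl' ⟨p₁, hmem, hp₁e⟩
          have h1 : Gj p₁ = F p₁ := run_untouched hGj huP
          have hnode : lj.1 = e := (sj.1 p₁ hp₁l).symm.trans (h1.trans (heF p₁ hp₁e))
          have henF : Enabled G F lj.1 := by rw [hnode]; exact heF
          have hdisj : ∀ l' ∈ pi, ∀ p ∈ G.dom l'.1, p ∉ G.dom lj.1 := by
            intro l' hl' p hmem hmem2
            exact hcl2 l' hl' ⟨p, hmem, hnode ▸ hmem2⟩
          have hcomm : Run G F (lj :: (pi ++ rho)) (Cfin G) := comm_front hsuffix henF hdisj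
          have hnew : Run G V (a ++ lj :: (pi ++ rho)) (Cfin G) := run_append hFa hcomm
          -- g occurs in pi ++ rho
          have hgmem : g ∈ pi ++ rho := by
            rcases pi with - | ⟨pi₀, pit⟩
            · exfalso
              have hgl : g = lj := by
                have := hdec2
                simp at this
                exact this.1
              apply heU
              rw [← hnode, ← hgl]
              exact hgU
            · have hgl : g = pi₀ := by
                have := hdec2
                simp at this
                exact this.1
              rw [hgl]
              simp
          obtain ⟨a₂, l₂, b₂, hdec3, hcl3, hU2⟩ :=
            exists_first (fun l' => Enabled G U l'.1) (pi ++ rho) ⟨g, hgmem, hgU⟩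
          -- new decomposition witnesses Pm (M + 1 + a₂.length)
          have hnew' : Run G V ((a ++ lj :: a₂) ++ l₂ :: b₂) (Cfin G) := by
            have : (a ++ lj :: a₂) ++ l₂ :: b₂ = a ++ lj :: (pi ++ rho) := by
              rw [hdec3]
              simp
            rw [this]
            exact hnew
          have hlensum : b.length + 1 = pi.length + rho.length + 1 := by
            have := congrArg List.length hdec2
            simp at this
            omega
          have hlennew : ((a ++ lj :: a₂) ++ l₂ :: b₂).length = k := by
            have h3 := congrArg List.length hdec3
            simp at h3 ⊢
            omega
          have hclean' : ∀ l' ∈ a ++ lj :: a₂, ¬ Enabled G U l'.1 := by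
            intro l' hl'
            rcases List.mem_append.1 hl' with h | h
            · exact haclean l' h
            · rcases List.mem_cons.1 h with h | h
              · rw [h, hnode]
                exact heU
              · exact hcl3 l' h
          have hPm' : Pm (M + 1 + a₂.length) := by
            refine ⟨(a ++ lj :: a₂) ++ l₂ :: b₂, a ++ lj :: a₂, l₂, b₂, hnew', hlennew,
              rfl, ?_, hclean', hU2⟩
            simp [halen]
            omega
          have hle' : M + 1 + a₂.length ≤ k := by
            have := hlennew
            simp at this
            omega
          have := Nat.le_findGreatest hle' hPm'
          omega
      -- lockstep: fire g at U as well
      set U' : P → N := fun p => if p ∈ G.dom g.1 then F₁ p else U p with hU'def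
      have hstepU : Step G U g U' := by
        refine ⟨hgU, sF.2.1, fun p => ⟨fun hp => ?_, fun hp => ?_⟩⟩
        · simp only [hU'def, if_pos hp]
          exact (sF.2.2 p).1 hp
        · simp only [hU'def, if_neg hp]
      -- the invariant for the new pair (U', F₁)
      have hh' : ∀ e, Enabled G U' e ∨ Enabled G F₁ e →
          (∃ x ∈ G.dom e, U' x = F₁ x) ∨ e = G.nfin := by
        intro e hePrem
        by_cases hwg : ∃ p ∈ G.dom e, p ∈ G.dom g.1
        · obtain ⟨p, hpe, hpg⟩ := hwg
          exact Or.inl ⟨p, hpe, by simp only [hU'def, if_pos hpg]⟩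
        · push_neg at hwg
          by_cases hUe : Enabled G U e
          · rcases hh e (Or.inl hUe) with ⟨x, hxd, hxv⟩ | h
            · left
              have hxg : x ∉ G.dom g.1 := hwg x hxd
              have hxa : ∀ l' ∈ a, x ∉ G.dom l'.1 := by
                by_contra hc
                push_neg at hc
                obtain ⟨w₁, l, w₂, E, E', hdec4, hE, hstep4, hrest4, hcl4, hxd4, hnode4⟩ :=
                  first_touch hFa hc
                have hlmem : l ∈ a := by rw [hdec4]; simp
                apply haclean l hlmem
                rw [hnode4, ← hxv, hUe x hxd]
                exact hUe
              have hFx : F x = V x := run_untouched hFa hxa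
              have hF₁x : F₁ x = F x := step_untouched sF hxg
              refine ⟨x, hxd, ?_⟩
              simp only [hU'def, if_neg hxg]
              rw [hxv, ← hFx, ← hF₁x]
            · exact Or.inr h
          · have heF₁ : Enabled G F₁ e := by
              rcases hePrem with h | h
              · exfalso
                apply hUe
                intro q hq
                rw [← h q hq]
                simp only [hU'def, if_neg (hwg q hq)]
              · exact h
            have heF : Enabled G F e := by
              intro q hq
              rw [← step_untouched sF (hwg q hq)]
              exact heF₁ q hq
            right
            have hfrozen := hF1 e heF hUe
            obtain ⟨q, hq⟩ := hd e
            have hfix : Cfin G q = F q :=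
              run_untouched (Run.cons sF rb) (fun l' hl' hmem => hfrozen l' hl' q hmem hq)
            exact (hfix.trans (heF q hq)).symm
      -- recursion on the shorter run b
      have hrU' : Reachable G U' := by
        obtain ⟨w₀, h₀⟩ := hrU
        exact ⟨w₀ ++ [g], run_append h₀ (Run.cons hstepU (Run.nil _))⟩
      have hrF₁ : Reachable G F₁ := by
        obtain ⟨w₀, h₀⟩ := hrV
        exact ⟨w₀ ++ (a ++ [g]),
          run_append h₀ (run_append hFa (Run.cons sF (Run.nil _)))⟩
      have hUF₁ : U' = F₁ := IH b.length (by omega) U' F₁ b hrU' hrF₁ rb rfl hh'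
      have hUF : U = F := by
        funext p
        by_cases hp : p ∈ G.dom g.1
        · rw [hgU p hp, sF.1 p hp]
        · have h1 : U p = U' p := by simp only [hU'def, if_neg hp]
          have h2 : F₁ p = F p := step_untouched sF hp
          rw [h1, hUF₁, h2]
      rcases a with - | ⟨a₀, at'⟩
      · cases hFa
        exact hUF
      · -- a nonempty: U = F has a strictly shorter run to Cfin; swap the pair
        have hsuf : Run G U (g :: b) (Cfin G) := by
          rw [hUF]
          exact Run.cons sF rb
        have hlensuf : (g :: b).length < k := by
          simp at hk ⊢
          omega
        have hhsym : ∀ e, Enabled G V e ∨ Enabled G U e →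
            (∃ x ∈ G.dom e, V x = U x) ∨ e = G.nfin := by
          intro e he
          rcases hh e he.symm with ⟨x, hxd, hxv⟩ | h
          · exact Or.inl ⟨x, hxd, hxv.symm⟩
          · exact Or.inr h
        exact (IH (g :: b).length hlensuf V U (g :: b) hrV hrU hsuf rfl hhsym).symm

end UCAux

/-- Unique Configuration Lemma. -/
theorem unique_configuration {P N R : Type*} (G : DNeg P N R) (hs : Sound G)
    (X : Set P) (C1 C2 : P → N)
    (h1 : Reachable G C1) (h2 : Reachable G C2)
    (hagree : ∀ p ∈ X, C1 p = C2 p)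
    (hen : ∀ n', Enabled G C1 n' ∨ Enabled G C2 n' → (G.dom n' ∩ X).Nonempty) :
    C1 = C2 := by
  classical
  have hd : ∀ n : N, (G.dom n).Nonempty := by
    intro n
    by_contra h
    rw [Set.not_nonempty_iff_eq_empty] at h
    have hen' : Enabled G C1 n := fun p hp => absurd hp (by simp [h])
    obtain ⟨x, hx⟩ := hen n (Or.inl hen')
    rw [h] at hx
    exact absurd hx.1 (by simp)
  obtain ⟨w2, h2'⟩ := h2
  obtain ⟨v, hv⟩ := hs C2 w2 h2'
  exact UCAux.main_lemma hd hs v.length C1 C2 v h1 ⟨w2, h2'⟩ hv rfl (fun e he => by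
    obtain ⟨x, hx⟩ := hen e he
    exact Or.inl ⟨x, hx.1, hagree x hx.2⟩)
end
end

section
/- Let w be a word over locations and let ℓ₁, ℓ₂ be fixed locations and K a set of locations. If there exist positions i < j of w with w_i = ℓ₁, w_j = ℓ₂, btw(i,j) ∩ K = ∅ and i and j incomparable or i ⊑ j in the trace order (i.e., not j ⊑ i), then there exists a word v Mazurkiewicz-equivalent to w that contains an occurrence of ℓ₁ followed, with no intervening K-location, by an occurrence of ℓ₂ (i.e., v ∈ L*·ℓ₁·(complement of K)*·ℓ₂·L*). -/
/-!
Only the positions strictly between `i` and `j` need to move. Those not above `i` in the trace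
order can be pulled, one at a time from left to right, to the left of `i`: each one is independent
of `i` and of every position already found to be above `i`. Dually, among the remaining ones,
those not below `j` can be pushed to the right of `j`. What is left between `i` and `j` lies in
`btw(i,j)`, hence avoids `K`.
-/

section
variable {P N R : Type*}

/-- Independence of letters (locations): disjoint domains of their nodes. -/
def IndepW (dom : N → Set P) (l1 l2 : N × R) : Prop :=
  Disjoint (dom l1.1) (dom l2.1)

def SwapW (dom : N → Set P) (w1 w2 : List (N × R)) : Prop :=
  ∃ u v l1 l2, IndepW dom l1 l2 ∧ w1 = u ++ l1 :: l2 :: v ∧ w2 = u ++ l2 :: l1 :: v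

/-- Mazurkiewicz equivalence of words. -/
def MazEquivW (dom : N → Set P) : List (N × R) → List (N × R) → Prop :=
  Relation.ReflTransGen (SwapW dom)

/-- The one-step trace order `⊑'` on positions of `w`. -/
def ordStep (dom : N → Set P) (w : List (N × R)) (i j : Fin w.length) : Prop :=
  (i : ℕ) ≤ (j : ℕ) ∧ ¬ IndepW dom (w.get i) (w.get j)

/-- The trace order `⊑`: transitive closure of `⊑'`. -/
def ord (dom : N → Set P) (w : List (N × R)) : Fin w.length → Fin w.length → Prop :=
  Relation.TransGen (ordStep dom w)

variable {dom : N → Set P}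

theorem IndepW.symm {a b : N × R} (h : IndepW dom a b) : IndepW dom b a :=
  Disjoint.symm h

instance : Trans (@MazEquivW P N R dom) (MazEquivW dom) (MazEquivW dom) :=
  ⟨Relation.ReflTransGen.trans⟩

theorem MazEquivW.refl (u : List (N × R)) : MazEquivW dom u u :=
  Relation.ReflTransGen.refl

theorem MazEquivW.append {x y x' y' : List (N × R)} (h : MazEquivW dom x y)
    (h' : MazEquivW dom x' y') : MazEquivW dom (x ++ x') (y ++ y') := by
  have hl : MazEquivW dom (x ++ x') (y ++ x') := by
    refine Relation.ReflTransGen.lift (· ++ x') ?_ _ _ h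
    rintro _ _ ⟨u, v, l1, l2, hind, rfl, rfl⟩
    exact ⟨u, v ++ x', l1, l2, hind, by simp, by simp⟩
  have hr : MazEquivW dom (y ++ x') (y ++ y') := by
    refine Relation.ReflTransGen.lift (y ++ ·) ?_ _ _ h'
    rintro _ _ ⟨u, v, l1, l2, hind, rfl, rfl⟩
    exact ⟨y ++ u, v, l1, l2, hind, by simp, by simp⟩
  exact hl.trans hr

theorem MazEquivW.cons {x y : List (N × R)} (a : N × R) (h : MazEquivW dom x y) :
    MazEquivW dom (a :: x) (a :: y) :=
  (MazEquivW.refl [a]).append h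

theorem MazEquivW.reverse {x y : List (N × R)} (h : MazEquivW dom x y) :
    MazEquivW dom x.reverse y.reverse := by
  refine Relation.ReflTransGen.lift List.reverse ?_ _ _ h
  rintro _ _ ⟨u, v, l1, l2, hind, rfl, rfl⟩
  exact ⟨v.reverse, u.reverse, l2, l1, hind.symm, by simp, by simp⟩

theorem mazEquivW_append_cons_of_forall_indepW {a : N × R} {u : List (N × R)}
    (hu : ∀ y ∈ u, IndepW dom y a) (s : List (N × R)) :
    MazEquivW dom (u ++ a :: s) (a :: (u ++ s)) := by
  induction u with
  | nil => exact MazEquivW.refl _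
  | cons b u ih =>
    have hba : IndepW dom b a := hu b List.mem_cons_self
    have hswap : MazEquivW dom (b :: a :: (u ++ s)) (a :: b :: (u ++ s)) :=
      .single ⟨[], u ++ s, b, a, hba, rfl, rfl⟩
    exact ((ih fun y hy => hu y (List.mem_cons_of_mem b hy)).cons b).trans hswap

section Reordering

variable {α : Type*} (g : α → N × R) (r : α → α → Prop)

theorem exists_mazEquivW_cone_split (t : List α) {c : List α}
    (h : (c ++ t).Pairwise fun a b => ¬ r a b → IndepW dom (g a) (g b)) :
    ∃ o a, MazEquivW dom ((c ++ t).map g) ((o ++ c ++ a).map g) ∧ a.Sublist t ∧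
      ∀ x ∈ a, ∃ y ∈ c, Relation.TransGen r y x := by
  induction t generalizing c with
  | nil => exact ⟨[], [], by simpa using MazEquivW.refl _, .refl _, by simp⟩
  | cons x t ih =>
    by_cases hx : ∃ y ∈ c, r y x
    · obtain ⟨y, hy, hyx⟩ := hx
      obtain ⟨o, a, he, hs, hreach⟩ := ih (c := c ++ [x]) (by simpa using h)
      refine ⟨o, x :: a, by simpa using he, hs.cons_cons x, ?_⟩
      rintro z (_ | ⟨_, hz⟩)
      · exact ⟨y, hy, .single hyx⟩
      · obtain ⟨y', hy', hy'z⟩ := hreach z hz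
        rcases List.mem_append.1 hy' with hy' | hy'
        · exact ⟨y', hy', hy'z⟩
        · rw [List.mem_singleton.1 hy'] at hy'z
          exact ⟨y, hy, hy'z.head hyx⟩
    · push Not at hx
      have hindep : ∀ y ∈ c.map g, IndepW dom y (g x) := by
        simp only [List.mem_map, forall_exists_index, and_imp, forall_apply_eq_imp_iff₂]
        exact fun y hy => (List.pairwise_append.1 h).2.2 y hy x List.mem_cons_self (hx y hy)
      obtain ⟨o, a, he, hs, hreach⟩ :=
        ih (h.sublist ((List.sublist_cons_self x t).append_left c))
      refine ⟨x :: o, a, ?_, hs.cons x, hreach⟩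
      calc MazEquivW dom ((c ++ x :: t).map g) (g x :: (c ++ t).map g) := by
            simpa using mazEquivW_append_cons_of_forall_indepW hindep (t.map g)
        MazEquivW dom _ ((x :: o ++ c ++ a).map g) := by simpa using he.cons (g x)

theorem exists_mazEquivW_pull_left {x : α} (t : List α)
    (h : (x :: t).Pairwise fun a b => ¬ r a b → IndepW dom (g a) (g b)) :
    ∃ o a, MazEquivW dom ((x :: t).map g) ((o ++ x :: a).map g) ∧ a.Sublist t ∧
      ∀ y ∈ a, Relation.TransGen r x y := by
  obtain ⟨o, a, he, hs, hreach⟩ := exists_mazEquivW_cone_split g r t (c := [x]) h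
  simp only [List.mem_singleton, exists_eq_left] at hreach
  exact ⟨o, a, by simpa using he, hs, hreach⟩

theorem exists_mazEquivW_pull_right (t : List α) {x : α}
    (h : (t ++ [x]).Pairwise fun a b => ¬ r a b → IndepW dom (g a) (g b)) :
    ∃ a o, MazEquivW dom ((t ++ [x]).map g) ((a ++ x :: o).map g) ∧ a.Sublist t ∧
      ∀ y ∈ a, Relation.TransGen r y x := by
  have hrev : (x :: t.reverse).Pairwise
      fun a b => ¬ Function.swap r a b → IndepW dom (g a) (g b) := by
    rw [show x :: t.reverse = (t ++ [x]).reverse by simp, List.pairwise_reverse]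
    exact h.imp fun hab hr => (hab hr).symm
  obtain ⟨o, a, he, hs, hreach⟩ := exists_mazEquivW_pull_left g (Function.swap r) t.reverse hrev
  refine ⟨a.reverse, o.reverse, by simpa using he.reverse, List.reverse_sublist.1 (by simpa), ?_⟩
  exact fun y hy => Relation.transGen_swap.1 (hreach y (List.mem_reverse.1 hy))

theorem exists_mazEquivW_between {x y : α} (t : List α)
    (h : (x :: (t ++ [y])).Pairwise fun a b => ¬ r a b → IndepW dom (g a) (g b)) :
    ∃ o a o', MazEquivW dom ((x :: (t ++ [y])).map g) ((o ++ x :: (a ++ y :: o')).map g) ∧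
      ∀ z ∈ a, Relation.TransGen r x z ∧ Relation.TransGen r z y := by
  obtain ⟨o, a, hleft, hat, habove⟩ :=
    exists_mazEquivW_pull_left g r t (h.sublist ((List.sublist_append_left t [y]).cons_cons x))
  obtain ⟨b, o', hright, hba, hbelow⟩ :=
    exists_mazEquivW_pull_right g r a (h.sublist ((hat.append (.refl [y])).cons x))
  refine ⟨o, b, o', ?_, fun z hz => ⟨habove z (hba.subset hz), hbelow z hz⟩⟩
  calc MazEquivW dom ((x :: (t ++ [y])).map g) ((o ++ x :: a).map g ++ [g y]) := by
        simpa using hleft.append (.refl [g y])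
    _ = (o ++ [x]).map g ++ (a ++ [y]).map g := by simp
    MazEquivW dom _ ((o ++ [x]).map g ++ (b ++ y :: o').map g) := (MazEquivW.refl _).append hright
    _ = ((o ++ x :: (b ++ y :: o')).map g) := by simp

end Reordering

theorem List.Pairwise.exists_eq_append_cons_append_cons {α : Type*} [Preorder α] {l : List α}
    (hl : l.Pairwise (· < ·)) {i j : α} (hi : i ∈ l) (hj : j ∈ l) (hij : i < j) :
    ∃ A M B, l = A ++ i :: (M ++ j :: B) := by
  obtain ⟨A, L, rfl⟩ := List.append_of_mem hi
  have hjL : j ∈ L := by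
    rcases List.mem_append.1 hj with hjA | hjL
    · exact absurd ((List.pairwise_append.1 hl).2.2 j hjA i List.mem_cons_self) hij.not_gt
    · exact (List.mem_cons.1 hjL).resolve_left hij.ne'
  obtain ⟨M, B, rfl⟩ := List.append_of_mem hjL
  exact ⟨A, M, B, rfl⟩

theorem pairwise_finRange_indepW_of_not_ordStep (w : List (N × R)) :
    (List.finRange w.length).Pairwise
      fun a b => ¬ ordStep dom w a b → IndepW dom (w.get a) (w.get b) :=
  (List.pairwise_lt_finRange _).imp fun hab hnot => not_not.1 fun hdep => hnot ⟨hab.le, hdep⟩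

theorem trace_reordering_general (dom : N → Set P) (K : Set (N × R)) (l1 l2 : N × R)
    (w : List (N × R)) (i j : Fin w.length) (hij : (i : ℕ) < (j : ℕ))
    (hi : w.get i = l1) (hj : w.get j = l2)
    (hbtw : ∀ k, ord dom w i k → ord dom w k j → w.get k ∉ K) :
    ∃ v1 v2 v3, MazEquivW dom w (v1 ++ l1 :: v2 ++ l2 :: v3) ∧
      ∀ l ∈ v2, l ∉ K := by
  set g := w.get
  obtain ⟨A, M, B, hL⟩ := (List.pairwise_lt_finRange w.length).exists_eq_append_cons_append_cons
    (List.mem_finRange i) (List.mem_finRange j) hij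
  have hw : w = (A ++ i :: (M ++ j :: B)).map g := hL ▸ (List.map_get_finRange w).symm
  have hsub : (i :: (M ++ [j])).Sublist (A ++ i :: (M ++ j :: B)) :=
    ((((List.singleton_sublist.2 List.mem_cons_self).append_left M).cons_cons i)).trans
      (List.sublist_append_right A _)
  obtain ⟨o, b, o', he, hb⟩ := exists_mazEquivW_between g (ordStep dom w) M
    ((hL ▸ pairwise_finRange_indepW_of_not_ordStep w).sublist hsub)
  refine ⟨(A ++ o).map g, b.map g, (o' ++ B).map g, ?_, ?_⟩
  · calc w = A.map g ++ ((i :: (M ++ [j])).map g ++ B.map g) := by simpa using hw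
      MazEquivW dom _ (A.map g ++ ((o ++ i :: (b ++ j :: o')).map g ++ B.map g)) :=
        (MazEquivW.refl _).append (he.append (MazEquivW.refl _))
      _ = (A ++ o).map g ++ l1 :: b.map g ++ l2 :: (o' ++ B).map g := by simp [hi, hj]
  · intro l hl
    obtain ⟨k, hk, rfl⟩ := List.mem_map.1 hl
    exact hbtw k (hb k hk).1 (hb k hk).2

/-- if `w` has positions `i < j` carrying `ℓ₁` and `ℓ₂`, with
`btw(i,j) ∩ K = ∅` and not `j ⊑ i`, then some word Mazurkiewicz-equivalent to
`w` is in `L*·ℓ₁·(K̄)*·ℓ₂·L*`. -/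
theorem trace_reordering (dom : N → Set P) (K : Set (N × R)) (l1 l2 : N × R)
    (w : List (N × R)) (i j : Fin w.length) (hij : (i : ℕ) < (j : ℕ))
    (hi : w.get i = l1) (hj : w.get j = l2)
    (hbtw : ∀ k, ord dom w i k → ord dom w k j → w.get k ∉ K)
    (hnot : ¬ ord dom w j i) :
    ∃ v1 v2 v3, MazEquivW dom w (v1 ++ l1 :: v2 ++ l2 :: v3) ∧
      ∀ l ∈ v2, l ∉ K :=
  trace_reordering_general dom K l1 l2 w i j hij hi hj hbtw

end
end
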